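/- Split-count bound on one block: for all constants C₀ > 0 and C > 0 there exists a constant C' > 0 (depending only on C₀ and C) such that the following holds. Let w ∈ (0,1], L > 0, B ≥ 3/4, R ≥ 0, let K ≥ 1 be an integer and c_1,...,c_K ∈ [0,1] be centers. Let the midpoints be r_k := (2k+1) w / 2 for k ∈ {0, 1, ..., n-1} where n := ⌈1/w⌉, and for each k set δ_k := min_{1≤j≤K} |r_k - c_j|. Let N_0,...,N_{n-1} ≥ 0 and D_0,...,D_{n-1} ≥ 0 be reals with ∑_k D_k ≤ R, and suppose that for every k with δ_k > C₀ B w one has N_k ≤ C ( B² L / (δ_k - C₀ B w)² + B D_k / (δ_k - C₀ B w) ). Then ∑_{k=0}^{n-1} min{ 1, N_k w² / L } ≤ C' ( B K + √( B K R w / L ) ). -/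

import Mathlib

open Finset

lemma card_nat_in_interval (S : Finset ℕ) (x y : ℝ) (hxy : x ≤ y)
    (h : ∀ k ∈ S, x ≤ (k : ℝ) ∧ (k : ℝ) ≤ y) : (S.card : ℝ) ≤ y - x + 1 := by
  rcases S.eq_empty_or_nonempty with rfl | ⟨k₀, hk₀⟩
  · simp; linarith
  · have hsub : S ⊆ Finset.Icc ⌈x⌉₊ ⌊y⌋₊ := by
      intro k hk
      exact Finset.mem_Icc.mpr ⟨Nat.ceil_le.mpr (h k hk).1, Nat.le_floor (h k hk).2⟩
    have h0 : ⌈x⌉₊ ≤ ⌊y⌋₊ :=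
      le_trans (Nat.ceil_le.mpr (h k₀ hk₀).1) (Nat.le_floor (h k₀ hk₀).2)
    have hy0 : 0 ≤ y := le_trans (Nat.cast_nonneg k₀) (h k₀ hk₀).2
    have hcard := Finset.card_le_card hsub
    rw [Nat.card_Icc] at hcard
    have hc : (S.card : ℝ) ≤ ((⌊y⌋₊ + 1 - ⌈x⌉₊ : ℕ) : ℝ) := Nat.cast_le.mpr hcard
    rw [Nat.cast_sub (by omega)] at hc
    push_cast at hc
    have h1 : (⌊y⌋₊ : ℝ) ≤ y := Nat.floor_le hy0
    have h2 : x ≤ (⌈x⌉₊ : ℝ) := Nat.le_ceil x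
    linarith

lemma card_midpoints_in_interval (S : Finset ℕ) (w a b : ℝ) (hw : 0 < w) (hab : a ≤ b)
    (h : ∀ k ∈ S, a ≤ (2 * (k : ℝ) + 1) * w / 2 ∧ (2 * (k : ℝ) + 1) * w / 2 ≤ b) :
    (S.card : ℝ) ≤ (b - a) / w + 1 := by
  have key := card_nat_in_interval S (a / w - 1 / 2) (b / w - 1 / 2)
    (by have : a / w ≤ b / w := by gcongr
        linarith)
    (fun k hk => by
      obtain ⟨h1, h2⟩ := h k hk
      constructor
      · rw [sub_le_iff_le_add, div_le_iff₀ hw]; nlinarith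
      · rw [le_sub_iff_add_le, le_div_iff₀ hw]; nlinarith)
  have e : b / w - 1 / 2 - (a / w - 1 / 2) + 1 = (b - a) / w + 1 := by
    rw [sub_div]; ring
  linarith [key, e.ge]

lemma card_abs_annulus (S : Finset ℕ) (w cc a b : ℝ) (hw : 0 < w) (hab : a ≤ b)
    (h : ∀ k ∈ S, a ≤ |(2 * (k : ℝ) + 1) * w / 2 - cc| ∧ |(2 * (k : ℝ) + 1) * w / 2 - cc| ≤ b) :
    (S.card : ℝ) ≤ 2 * ((b - a) / w + 1) := by
  classical
  set S1 := S.filter (fun k : ℕ => cc ≤ (2 * (k : ℝ) + 1) * w / 2) with hS1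
  set S2 := S.filter (fun k : ℕ => ¬ cc ≤ (2 * (k : ℝ) + 1) * w / 2) with hS2
  have hcard : S1.card + S2.card = S.card :=
    Finset.card_filter_add_card_filter_not _
  have h1 : (S1.card : ℝ) ≤ (cc + b - (cc + a)) / w + 1 :=
    card_midpoints_in_interval S1 w (cc + a) (cc + b) hw (by linarith) (fun k hk => by
      obtain ⟨hk1, hk2⟩ := Finset.mem_filter.mp hk
      obtain ⟨ha', hb'⟩ := h k hk1
      rw [abs_of_nonneg (by linarith)] at ha' hb'
      constructor <;> linarith)
  have h2 : (S2.card : ℝ) ≤ (cc - a - (cc - b)) / w + 1 :=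
    card_midpoints_in_interval S2 w (cc - b) (cc - a) hw (by linarith) (fun k hk => by
      obtain ⟨hk1, hk2⟩ := Finset.mem_filter.mp hk
      obtain ⟨ha', hb'⟩ := h k hk1
      push_neg at hk2
      rw [abs_of_neg (by linarith)] at ha' hb'
      constructor <;> linarith)
  have e1 : cc + b - (cc + a) = b - a := by ring
  have e2 : cc - a - (cc - b) = b - a := by ring
  rw [e1] at h1; rw [e2] at h2
  have : ((S1.card + S2.card : ℕ) : ℝ) = (S1.card : ℝ) + S2.card := by push_cast; ring
  rw [← hcard]
  push_cast
  linarith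

lemma sum_inv_sq_le (M : ℕ) : ∑ m ∈ Finset.Icc 1 M, (1 : ℝ) / (m : ℝ) ^ 2 ≤ 2 := by
  have key : ∀ M : ℕ, ∑ m ∈ Finset.range M, (1 : ℝ) / ((m : ℝ) + 1) ^ 2 ≤ 2 - 2 / ((M : ℝ) + 1) := by
    intro M
    induction M with
    | zero => simp
    | succ M ih =>
      rw [Finset.sum_range_succ]
      push_cast
      have h1 : (0 : ℝ) < (M : ℝ) + 1 := by positivity
      have h2 : (0 : ℝ) < (M : ℝ) + 2 := by positivity
      have hstep : (1 : ℝ) / ((M : ℝ) + 1) ^ 2 ≤ 2 / ((M : ℝ) + 1) - 2 / ((M : ℝ) + 2) := by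
        rw [div_sub_div _ _ (ne_of_gt h1) (ne_of_gt h2), div_le_div_iff₀ (by positivity) (by positivity)]
        nlinarith
      have : ((M : ℝ) + 1) + 1 = (M : ℝ) + 2 := by ring
      rw [this]
      linarith
  have conv : ∑ m ∈ Finset.Icc 1 M, (1 : ℝ) / (m : ℝ) ^ 2
      = ∑ m ∈ Finset.range M, (1 : ℝ) / ((m : ℝ) + 1) ^ 2 := by
    rw [← Finset.Ico_add_one_right_eq_Icc, Finset.sum_Ico_eq_sum_range]
    simp only [Nat.add_sub_cancel]
    apply Finset.sum_congr rfl
    intro m _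
    push_cast
    ring_nf
  rw [conv]
  have := key M
  have h3 : (0:ℝ) ≤ 2 / ((M : ℝ) + 1) := by positivity
  linarith

set_option maxHeartbeats 4000000

/-- **Split-count bound on one block.** For all constants `C₀ > 0` and `C > 0` there is
`C' > 0` such that: for `w ∈ (0,1]`, `L > 0`, `B ≥ 3/4`, `R ≥ 0`, centers
`c 1, ..., c K ∈ [0,1]` (`K ≥ 1`), midpoints `r k = (2k+1) w / 2` for `k < n := ⌈1/w⌉`,
distances `δ k = min_{1 ≤ j ≤ K} |r k - c j|`, and nonnegative `N k`, `D k` with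
`∑ D k ≤ R`, if for every `k` with `δ k > C₀ B w` one has
`N k ≤ C (B² L / (δ k - C₀ B w)² + B D k / (δ k - C₀ B w))`, then
`∑ k min {1, N k w² / L} ≤ C' (B K + √(B K R w / L))`. -/
theorem split_count_on_block (C₀ C : ℝ) (hC₀ : 0 < C₀) (hC : 0 < C) :
    ∃ C' : ℝ, 0 < C' ∧
      ∀ (w L B R : ℝ) (K : ℕ) (hK : 1 ≤ K) (c : ℕ → ℝ) (N D : ℕ → ℝ),
        0 < w → w ≤ 1 → 0 < L → 3 / 4 ≤ B → 0 ≤ R →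
        (∀ j, 1 ≤ j → j ≤ K → c j ∈ Set.Icc (0 : ℝ) 1) →
        (∀ k < ⌈1 / w⌉₊, 0 ≤ N k) →
        (∀ k < ⌈1 / w⌉₊, 0 ≤ D k) →
        (∑ k ∈ Finset.range ⌈1 / w⌉₊, D k) ≤ R →
        (∀ k < ⌈1 / w⌉₊,
          C₀ * B * w <
              (Finset.Icc 1 K).inf' (Finset.nonempty_Icc.mpr hK)
                (fun j => |(2 * (k : ℝ) + 1) * w / 2 - c j|) →
            N k ≤ C * (B ^ 2 * L /
                ((Finset.Icc 1 K).inf' (Finset.nonempty_Icc.mpr hK)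
                  (fun j => |(2 * (k : ℝ) + 1) * w / 2 - c j|) - C₀ * B * w) ^ 2 +
              B * D k /
                ((Finset.Icc 1 K).inf' (Finset.nonempty_Icc.mpr hK)
                  (fun j => |(2 * (k : ℝ) + 1) * w / 2 - c j|) - C₀ * B * w))) →
        (∑ k ∈ Finset.range ⌈1 / w⌉₊, min 1 (N k * w ^ 2 / L)) ≤
          C' * (B * K + Real.sqrt (B * K * R * w / L)) := by
  classical
  refine ⟨20 * (max 1 C₀ + C + Real.sqrt C + 1), by positivity, ?_⟩
  intro w L B R K hK c N D hw hw1 hL hB hR hc hN hD hsumD hmain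
  set n := ⌈1 / w⌉₊ with hn
  set δ : ℕ → ℝ := fun k => (Finset.Icc 1 K).inf' (Finset.nonempty_Icc.mpr hK)
    (fun j => |(2 * (k : ℝ) + 1) * w / 2 - c j|) with hδ
  have hmain' : ∀ k, k < n → C₀ * B * w < δ k →
      N k ≤ C * (B ^ 2 * L / (δ k - C₀ * B * w) ^ 2 + B * D k / (δ k - C₀ * B * w)) := by
    intro k hk h
    have h' : C₀ * B * w < (Finset.Icc 1 K).inf' (Finset.nonempty_Icc.mpr hK)
        (fun j => |(2 * (k : ℝ) + 1) * w / 2 - c j|) := by simpa [hδ] using h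
    simpa [hδ] using hmain k hk h'
  -- basic positivity facts
  have hB0 : (0 : ℝ) < B := lt_of_lt_of_le (by norm_num) hB
  have hK0 : (0 : ℝ) < (K : ℝ) := by exact_mod_cast hK
  set M₀ : ℝ := max 1 C₀ * B with hM₀
  set σ : ℝ := Real.sqrt (C * B * R * w / (K * L)) with hσ
  set Δ : ℝ := (M₀ + σ) * w with hΔ
  have hσ0 : 0 ≤ σ := Real.sqrt_nonneg _
  have hmax1 : (1 : ℝ) ≤ max 1 C₀ := le_max_left 1 C₀
  have hM₀B : B ≤ M₀ := by rw [hM₀]; nlinarith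
  have hM₀C₀ : C₀ * B ≤ M₀ := by
    rw [hM₀]
    have := le_max_right 1 C₀
    nlinarith
  have hM₀pos : 0 < M₀ := lt_of_lt_of_le hB0 hM₀B
  have hΔpos : 0 < Δ := by rw [hΔ]; positivity
  have hΔB : B * w ≤ Δ := by rw [hΔ]; nlinarith
  have hΔσ : σ * w ≤ Δ := by rw [hΔ]; nlinarith
  have hδ0 : ∀ k, 0 ≤ δ k := by
    intro k
    rw [hδ]
    exact Finset.le_inf' _ _ (fun j _ => abs_nonneg _)
  -- delta is at most 3 on range n
  have hδ3 : ∀ k ∈ Finset.range n, δ k ≤ 3 := by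
    intro k hk
    have hk' : k < n := Finset.mem_range.mp hk
    have h1 : δ k ≤ |(2 * (k : ℝ) + 1) * w / 2 - c 1| := by
      rw [hδ]
      exact Finset.inf'_le _ (Finset.mem_Icc.mpr ⟨le_refl 1, hK⟩)
    have hc1 := hc 1 le_rfl hK
    obtain ⟨hc1a, hc1b⟩ := hc1
    have hkn : (k : ℝ) + 1 ≤ (n : ℝ) := by exact_mod_cast hk'
    have hnw : (n : ℝ) < 1 / w + 1 := by
      rw [hn]
      exact Nat.ceil_lt_add_one (by positivity)
    have hr2 : (2 * (k : ℝ) + 1) * w / 2 ≤ 2 := by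
      have h2 : (2 * (k : ℝ) + 1) * w / 2 ≤ (n : ℝ) * w := by
        nlinarith [mul_nonneg (sub_nonneg.mpr hkn) hw.le]
      have h3 : (n : ℝ) * w ≤ 1 + w := by
        have hww : 1 / w * w = 1 := by field_simp
        nlinarith [mul_pos (sub_pos.mpr hnw) hw]
      linarith
    have hr0 : 0 ≤ (2 * (k : ℝ) + 1) * w / 2 := by positivity
    have : |(2 * (k : ℝ) + 1) * w / 2 - c 1| ≤ 2 := by
      rw [abs_le]; constructor <;> linarith
    linarith
  -- the counting lemma for δ
  have hcount : ∀ a b : ℝ, 0 ≤ a → a ≤ b → ∀ S : Finset ℕ, (∀ k ∈ S, a ≤ δ k ∧ δ k ≤ b) →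
      (S.card : ℝ) ≤ (K : ℝ) * (2 * ((b - a) / w + 1)) := by
    intro a b ha hab S hS
    have hsub : S ⊆ (Finset.Icc 1 K).biUnion (fun j => S.filter
        (fun k : ℕ => a ≤ |(2 * (k : ℝ) + 1) * w / 2 - c j| ∧ |(2 * (k : ℝ) + 1) * w / 2 - c j| ≤ b)) := by
      intro k hk
      obtain ⟨j, hj, hje⟩ := Finset.exists_mem_eq_inf' (Finset.nonempty_Icc.mpr hK)
        (fun j => |(2 * (k : ℝ) + 1) * w / 2 - c j|)
      have hje' : δ k = |(2 * (k : ℝ) + 1) * w / 2 - c j| := by rw [hδ]; exact hje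
      refine Finset.mem_biUnion.mpr ⟨j, hj, Finset.mem_filter.mpr ⟨hk, ?_, ?_⟩⟩
      · rw [← hje']; exact (hS k hk).1
      · rw [← hje']; exact (hS k hk).2
    have h1 : S.card ≤ ∑ j ∈ Finset.Icc 1 K, (S.filter
        (fun k : ℕ => a ≤ |(2 * (k : ℝ) + 1) * w / 2 - c j| ∧ |(2 * (k : ℝ) + 1) * w / 2 - c j| ≤ b)).card :=
      le_trans (Finset.card_le_card hsub) (Finset.card_biUnion_le)
    have h2 : ∀ j ∈ Finset.Icc 1 K, ((S.filter
        (fun k : ℕ => a ≤ |(2 * (k : ℝ) + 1) * w / 2 - c j| ∧ |(2 * (k : ℝ) + 1) * w / 2 - c j| ≤ b)).card : ℝ)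
        ≤ 2 * ((b - a) / w + 1) := fun j _ =>
      card_abs_annulus _ w (c j) a b hw hab (fun k hk => (Finset.mem_filter.mp hk).2)
    calc (S.card : ℝ) ≤ ∑ j ∈ Finset.Icc 1 K, ((S.filter
        (fun k : ℕ => a ≤ |(2 * (k : ℝ) + 1) * w / 2 - c j| ∧ |(2 * (k : ℝ) + 1) * w / 2 - c j| ≤ b)).card : ℝ) := by
          exact_mod_cast h1
      _ ≤ ∑ _j ∈ Finset.Icc 1 K, 2 * ((b - a) / w + 1) := Finset.sum_le_sum h2
      _ = (K : ℝ) * (2 * ((b - a) / w + 1)) := by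
          rw [Finset.sum_const, Nat.card_Icc]
          simp [nsmul_eq_mul]
  set b₀ : ℝ := Δ + C₀ * B * w with hb₀
  have hb₀pos : 0 < b₀ := by rw [hb₀]; positivity
  set F := (Finset.range n).filter (fun k => b₀ < δ k) with hF
  set G := (Finset.range n).filter (fun k => ¬ b₀ < δ k) with hG
  have hsplit : (∑ k ∈ Finset.range n, min 1 (N k * w ^ 2 / L))
      = (∑ k ∈ F, min 1 (N k * w ^ 2 / L)) + ∑ k ∈ G, min 1 (N k * w ^ 2 / L) := by
    rw [hF, hG]
    exact (Finset.sum_filter_add_sum_filter_not (Finset.range n) _ _).symm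
  -- near bound
  have hnear : (∑ k ∈ G, min 1 (N k * w ^ 2 / L)) ≤ (K : ℝ) * (2 * ((b₀ - 0) / w + 1)) := by
    have h1 : (∑ k ∈ G, min 1 (N k * w ^ 2 / L)) ≤ ∑ _k ∈ G, (1 : ℝ) :=
      Finset.sum_le_sum (fun k _ => min_le_left _ _)
    have h2 : (∑ _k ∈ G, (1 : ℝ)) = (G.card : ℝ) := by simp
    have h3 := hcount 0 b₀ le_rfl hb₀pos.le G (fun k hk => by
      have hk2 := (Finset.mem_filter.mp (hG ▸ hk)).2
      push_neg at hk2
      exact ⟨hδ0 k, hk2⟩)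
    linarith
  -- pointwise far bound
  have hfar_pt : ∀ k ∈ F, min 1 (N k * w ^ 2 / L)
      ≤ C * B ^ 2 * w ^ 2 * (1 / (δ k - C₀ * B * w) ^ 2) + (C * B * w ^ 2 / (L * Δ)) * D k := by
    intro k hk
    obtain ⟨hkr, hkb⟩ := Finset.mem_filter.mp (hF ▸ hk)
    have hkn := Finset.mem_range.mp hkr
    have hδ'Δ : Δ < δ k - C₀ * B * w := by rw [hb₀] at hkb; linarith
    have hδ'pos : 0 < δ k - C₀ * B * w := lt_trans hΔpos hδ'Δ
    have hNk := hmain' k hkn (by nlinarith)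
    have hDk := hD k hkn
    calc min 1 (N k * w ^ 2 / L) ≤ N k * w ^ 2 / L := min_le_right _ _
      _ ≤ (C * (B ^ 2 * L / (δ k - C₀ * B * w) ^ 2 + B * D k / (δ k - C₀ * B * w))) * w ^ 2 / L := by
          gcongr
      _ = C * B ^ 2 * w ^ 2 * (1 / (δ k - C₀ * B * w) ^ 2)
          + (C * B * w ^ 2 / L) * (D k / (δ k - C₀ * B * w)) := by
          field_simp
      _ ≤ C * B ^ 2 * w ^ 2 * (1 / (δ k - C₀ * B * w) ^ 2) + (C * B * w ^ 2 / L) * (D k / Δ) := by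
          gcongr
      _ = C * B ^ 2 * w ^ 2 * (1 / (δ k - C₀ * B * w) ^ 2) + (C * B * w ^ 2 / (L * Δ)) * D k := by
          rw [div_mul_div_comm, div_mul_eq_mul_div]
  -- the inverse-square sum over the far set
  have hSg : (∑ k ∈ F, 1 / (δ k - C₀ * B * w) ^ 2) ≤ 4 * (K : ℝ) * (Δ / w + 1) / Δ ^ 2 := by
    set Mmax := ⌊3 / Δ⌋₊ with hMmax
    set φ : ℕ → ℕ := fun k => ⌈(δ k - C₀ * B * w) / Δ⌉₊ - 1 with hφ
    have hFmem : ∀ k ∈ F, Δ < δ k - C₀ * B * w ∧ k ∈ Finset.range n := by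
      intro k hk
      obtain ⟨hkr, hkb⟩ := Finset.mem_filter.mp (hF ▸ hk)
      rw [hb₀] at hkb
      exact ⟨by linarith, hkr⟩
    have hceil2 : ∀ k ∈ F, 2 ≤ ⌈(δ k - C₀ * B * w) / Δ⌉₊ := by
      intro k hk
      have h1 := (hFmem k hk).1
      have : (1 : ℝ) < (δ k - C₀ * B * w) / Δ := (one_lt_div hΔpos).mpr h1
      exact Nat.lt_ceil.mpr (by exact_mod_cast this)
    have hmaps : ∀ k ∈ F, φ k ∈ Finset.Icc 1 Mmax := by
      intro k hk
      obtain ⟨h1, hkr⟩ := hFmem k hk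
      have h2 := hceil2 k hk
      refine Finset.mem_Icc.mpr ⟨by simp only [hφ]; omega, ?_⟩
      rw [hMmax]
      apply Nat.le_floor
      have hcast : ((φ k : ℕ) : ℝ) = (⌈(δ k - C₀ * B * w) / Δ⌉₊ : ℝ) - 1 := by
        simp only [hφ]
        push_cast [Nat.cast_sub (by omega : 1 ≤ ⌈(δ k - C₀ * B * w) / Δ⌉₊)]
        ring
      have h3 : (⌈(δ k - C₀ * B * w) / Δ⌉₊ : ℝ) < (δ k - C₀ * B * w) / Δ + 1 :=
        Nat.ceil_lt_add_one (div_nonneg (by linarith) hΔpos.le)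
      have h4 : (δ k - C₀ * B * w) / Δ ≤ 3 / Δ :=
        (div_le_div_iff_of_pos_right hΔpos).mpr (by nlinarith [hδ3 k hkr, mul_pos (mul_pos hC₀ hB0) hw])
      rw [hcast]
      linarith
    rw [← Finset.sum_fiberwise_of_maps_to hmaps]
    have hinner : ∀ m ∈ Finset.Icc 1 Mmax,
        (∑ k ∈ F.filter (fun k => φ k = m), 1 / (δ k - C₀ * B * w) ^ 2)
        ≤ ((K : ℝ) * (2 * (Δ / w + 1))) * (1 / ((m : ℝ) * Δ) ^ 2) := by
      intro m hm
      have hm1 : 1 ≤ m := (Finset.mem_Icc.mp hm).1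
      have hm0 : (0 : ℝ) < (m : ℝ) := by exact_mod_cast hm1
      have hmΔ : 0 < (m : ℝ) * Δ := by positivity
      have hpt : ∀ k ∈ F.filter (fun k => φ k = m),
          (m : ℝ) * Δ < δ k - C₀ * B * w ∧ δ k - C₀ * B * w ≤ ((m : ℝ) + 1) * Δ := by
        intro k hk
        obtain ⟨hkF, hkφ⟩ := Finset.mem_filter.mp hk
        have h2 := hceil2 k hkF
        have hce : ⌈(δ k - C₀ * B * w) / Δ⌉₊ = m + 1 := by
          simp only [hφ] at hkφ
          omega
        constructor
        · have : ((m : ℕ) : ℝ) < (δ k - C₀ * B * w) / Δ := Nat.lt_ceil.mp (by omega)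
          exact (lt_div_iff₀ hΔpos).mp this
        · have : (δ k - C₀ * B * w) / Δ ≤ ((m + 1 : ℕ) : ℝ) := Nat.ceil_le.mp (le_of_eq hce)
          have h3 := (div_le_iff₀ hΔpos).mp this
          push_cast at h3
          linarith
      have hcard : ((F.filter (fun k => φ k = m)).card : ℝ) ≤ (K : ℝ) * (2 * (Δ / w + 1)) := by
        have h5 := hcount ((m : ℝ) * Δ + C₀ * B * w) (((m : ℝ) + 1) * Δ + C₀ * B * w)
          (by positivity) (by nlinarith) (F.filter (fun k => φ k = m))
          (fun k hk => ⟨by linarith [(hpt k hk).1], by linarith [(hpt k hk).2]⟩)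
        have e : ((m : ℝ) + 1) * Δ + C₀ * B * w - ((m : ℝ) * Δ + C₀ * B * w) = Δ := by ring
        rwa [e] at h5
      have hsum : (∑ k ∈ F.filter (fun k => φ k = m), 1 / (δ k - C₀ * B * w) ^ 2)
          ≤ ((F.filter (fun k => φ k = m)).card : ℝ) * (1 / ((m : ℝ) * Δ) ^ 2) := by
        rw [← nsmul_eq_mul]
        apply Finset.sum_le_card_nsmul
        intro k hk
        have h6 := (hpt k hk).1
        have h7 : 0 < δ k - C₀ * B * w := lt_trans hmΔ h6
        exact one_div_le_one_div_of_le (by positivity) (pow_le_pow_left₀ hmΔ.le h6.le 2)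
      calc (∑ k ∈ F.filter (fun k => φ k = m), 1 / (δ k - C₀ * B * w) ^ 2)
          ≤ ((F.filter (fun k => φ k = m)).card : ℝ) * (1 / ((m : ℝ) * Δ) ^ 2) := hsum
        _ ≤ ((K : ℝ) * (2 * (Δ / w + 1))) * (1 / ((m : ℝ) * Δ) ^ 2) := by
            gcongr
    calc (∑ m ∈ Finset.Icc 1 Mmax, ∑ k ∈ F.filter (fun k => φ k = m), 1 / (δ k - C₀ * B * w) ^ 2)
        ≤ ∑ m ∈ Finset.Icc 1 Mmax, ((K : ℝ) * (2 * (Δ / w + 1))) * (1 / ((m : ℝ) * Δ) ^ 2) :=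
          Finset.sum_le_sum hinner
      _ = ((K : ℝ) * (2 * (Δ / w + 1)) / Δ ^ 2) * ∑ m ∈ Finset.Icc 1 Mmax, 1 / (m : ℝ) ^ 2 := by
          rw [Finset.mul_sum]
          apply Finset.sum_congr rfl
          intro m hm
          have hm1 : 1 ≤ m := (Finset.mem_Icc.mp hm).1
          have hm0 : ((m : ℝ)) ≠ 0 := by positivity
          field_simp
      _ ≤ ((K : ℝ) * (2 * (Δ / w + 1)) / Δ ^ 2) * 2 := by
          apply mul_le_mul_of_nonneg_left (sum_inv_sq_le Mmax)
          positivity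
      _ = 4 * (K : ℝ) * (Δ / w + 1) / Δ ^ 2 := by ring
  have hKne : (K : ℝ) ≠ 0 := ne_of_gt hK0
  have hLne : L ≠ 0 := ne_of_gt hL
  -- sum of D over F
  have hDF : ∑ k ∈ F, D k ≤ R := by
    refine le_trans (Finset.sum_le_sum_of_subset_of_nonneg
      (by rw [hF]; exact Finset.filter_subset _ _) ?_) hsumD
    intro k hk _
    exact hD k (Finset.mem_range.mp hk)
  have hfar : (∑ k ∈ F, min 1 (N k * w ^ 2 / L))
      ≤ C * B ^ 2 * w ^ 2 * (4 * (K : ℝ) * (Δ / w + 1) / Δ ^ 2) + (C * B * w ^ 2 / (L * Δ)) * R := by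
    calc (∑ k ∈ F, min 1 (N k * w ^ 2 / L))
        ≤ ∑ k ∈ F, (C * B ^ 2 * w ^ 2 * (1 / (δ k - C₀ * B * w) ^ 2)
            + (C * B * w ^ 2 / (L * Δ)) * D k) := Finset.sum_le_sum hfar_pt
      _ = C * B ^ 2 * w ^ 2 * (∑ k ∈ F, 1 / (δ k - C₀ * B * w) ^ 2)
            + (C * B * w ^ 2 / (L * Δ)) * ∑ k ∈ F, D k := by
          rw [Finset.sum_add_distrib, Finset.mul_sum, Finset.mul_sum]
      _ ≤ _ := by gcongr
  -- numeric bound for the first far term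
  have hbound1 : C * B ^ 2 * w ^ 2 * (4 * (K : ℝ) * (Δ / w + 1) / Δ ^ 2) ≤ 10 * C * B * K := by
    have hs : 0 < M₀ + σ := by linarith
    have hsB : B ≤ M₀ + σ := by linarith
    have hs34 : 3 / 4 ≤ M₀ + σ := by linarith
    have h1 : Δ / w = M₀ + σ := by rw [hΔ]; field_simp
    have h2 : Δ ^ 2 = (M₀ + σ) ^ 2 * w ^ 2 := by rw [hΔ]; ring
    rw [h1, h2]
    have e : C * B ^ 2 * w ^ 2 * (4 * (K : ℝ) * ((M₀ + σ) + 1) / ((M₀ + σ) ^ 2 * w ^ 2))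
        = 4 * C * B ^ 2 * (K : ℝ) * ((M₀ + σ) + 1) / (M₀ + σ) ^ 2 := by
      field_simp
    rw [e, div_le_iff₀ (by positivity)]
    have key : 4 * B * ((M₀ + σ) + 1) ≤ 10 * (M₀ + σ) ^ 2 := by
      nlinarith [mul_nonneg (sub_nonneg.mpr hsB) hs.le, mul_nonneg (sub_nonneg.mpr hs34) hs.le]
    nlinarith [mul_le_mul_of_nonneg_left key (by positivity : (0 : ℝ) ≤ C * B * (K : ℝ))]
  -- numeric bound for the second far term
  have hbound2 : (C * B * w ^ 2 / (L * Δ)) * R ≤ (K : ℝ) * σ := by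
    rcases eq_or_lt_of_le hR with hR0 | hR0
    · rw [← hR0, mul_zero]
      positivity
    · have hσpos : 0 < σ := by rw [hσ]; exact Real.sqrt_pos.mpr (by positivity)
      have hσ2 : σ ^ 2 = C * B * R * w / (K * L) := by rw [hσ]; exact Real.sq_sqrt (by positivity)
      have e : (K : ℝ) * L * σ ^ 2 = C * B * R * w := by
        rw [hσ2]; field_simp
      have h1 : (C * B * w ^ 2 / (L * Δ)) * R ≤ (C * B * w ^ 2 / (L * (σ * w))) * R := by
        have hLσ : 0 < L * (σ * w) := by positivity
        have hmono : L * (σ * w) ≤ L * Δ := by nlinarith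
        exact mul_le_mul_of_nonneg_right
          (div_le_div_of_nonneg_left (by positivity) hLσ hmono) hR
      have h2 : (C * B * w ^ 2 / (L * (σ * w))) * R = (K : ℝ) * σ := by
        rw [div_mul_eq_mul_div, eq_comm, eq_div_iff (by positivity)]
        linear_combination w * e
      exact le_trans h1 (le_of_eq h2)
  -- numeric bound for the near term
  have hnear2 : (K : ℝ) * (2 * ((b₀ - 0) / w + 1)) ≤ 7 * M₀ * K + 2 * ((K : ℝ) * σ) := by
    have h1 : b₀ - 0 = (M₀ + σ + C₀ * B) * w := by
      rw [hb₀, hΔ]; ring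
    rw [h1, mul_div_cancel_right₀ _ (ne_of_gt hw)]
    have h34 : 1 ≤ (4 / 3) * M₀ := by nlinarith [hM₀B, hB]
    have key : 2 * (M₀ + σ + C₀ * B + 1) ≤ 7 * M₀ + 2 * σ := by nlinarith [hM₀C₀, hM₀pos]
    nlinarith [mul_le_mul_of_nonneg_left key hK0.le]
  -- the square root identity
  have hKσ : (K : ℝ) * σ = Real.sqrt C * Real.sqrt (B * K * R * w / L) := by
    have h1 : (K : ℝ) * σ = Real.sqrt ((K : ℝ) ^ 2 * (C * B * R * w / (K * L))) := by
      rw [hσ, Real.sqrt_mul (sq_nonneg _), Real.sqrt_sq hK0.le]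
    rw [h1, show (K : ℝ) ^ 2 * (C * B * R * w / (K * L)) = C * (B * K * R * w / L) by
      field_simp, Real.sqrt_mul hC.le]
  -- final assembly
  have hX0 : 0 ≤ Real.sqrt (B * K * R * w / L) := Real.sqrt_nonneg _
  have hsC : 0 ≤ Real.sqrt C := Real.sqrt_nonneg C
  have hfinal1 : 10 * C * B * (K : ℝ) + 7 * M₀ * K
      ≤ (20 * (max 1 C₀ + C + Real.sqrt C + 1)) * (B * K) := by
    rw [hM₀]
    have key : 10 * C + 7 * max 1 C₀ ≤ 20 * (max 1 C₀ + C + Real.sqrt C + 1) := by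
      nlinarith [hmax1, hC, hsC]
    nlinarith [mul_le_mul_of_nonneg_right key (mul_nonneg hB0.le hK0.le)]
  have hfinal2 : 3 * ((K : ℝ) * σ)
      ≤ (20 * (max 1 C₀ + C + Real.sqrt C + 1)) * Real.sqrt (B * K * R * w / L) := by
    rw [hKσ]
    have key : 3 * Real.sqrt C ≤ 20 * (max 1 C₀ + C + Real.sqrt C + 1) := by
      nlinarith [hmax1, hC, hsC]
    nlinarith [mul_le_mul_of_nonneg_right key hX0]
  have hdist : (20 * (max 1 C₀ + C + Real.sqrt C + 1)) * (B * K + Real.sqrt (B * K * R * w / L))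
      = (20 * (max 1 C₀ + C + Real.sqrt C + 1)) * (B * K)
        + (20 * (max 1 C₀ + C + Real.sqrt C + 1)) * Real.sqrt (B * K * R * w / L) := by ring
  rw [hsplit, hdist]
  linarith [hfar, hnear, hbound1, hbound2, hnear2, hfinal1, hfinal2]
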